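/- Let x satisfy G(x) ∈ K. Then for every c ≥ 0 the penalty function Φ_c(x) = F(x) + c·dist(G(x),K) is Hadamard directionally differentiable at x: for every h ∈ ℝ^d, Φ′_c(x,h) = lim_{[α,h′]→[+0,h]} (Φ_c(x+αh′) − Φ_c(x))/α = max_{v ∈ ∂Φ_c(x)} ⟨v,h⟩, where ∂Φ_c(x) = ∂F(x) + c·∂φ(x) with ∂φ(x) = { [DG(x)]*y* ∈ ℝ^d : y* ∈ Y*, ‖y*‖ ≤ 1, ⟨y*, y − G(x)⟩ ≤ 0 for all y ∈ K }, and the set ∂Φ_c(x) is convex and compact. -/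

import Mathlib

open Set Filter Topology Pointwise
open scoped RealInnerProductSpace

noncomputable section

/-- The contingent (Bouligand tangent) cone to a set `C` at a point `x`. -/
def contingentCone {X : Type*} [NormedAddCommGroup X] [NormedSpace ℝ X]
    (C : Set X) (x : X) : Set X :=
  {h | ∃ (a : ℕ → ℝ) (v : ℕ → X), (∀ n, 0 < a n) ∧
    Tendsto a atTop (𝓝 0) ∧ Tendsto v atTop (𝓝 h) ∧ ∀ n, x + a n • v n ∈ C}

/-- Robinson's constraint qualification at a feasible point `x`. -/
def RobinsonCQ {d : ℕ} {Y : Type*} [NormedAddCommGroup Y] [NormedSpace ℝ Y]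
    (G : EuclideanSpace ℝ (Fin d) → Y) (K : Set Y)
    (A : Set (EuclideanSpace ℝ (Fin d))) (x : EuclideanSpace ℝ (Fin d)) : Prop :=
  (0 : Y) ∈ interior {y | ∃ a ∈ A, ∃ k ∈ K, y = G x + fderiv ℝ G x (a - x) - k}

variable {d : ℕ} {W : Type*} [TopologicalSpace W]
variable {Y : Type*} [NormedAddCommGroup Y] [NormedSpace ℝ Y]

/-- `F(x) = max_{ω ∈ W} f(x, ω)` (as a supremum). -/
def Fmax (f : EuclideanSpace ℝ (Fin d) → W → ℝ) (x : EuclideanSpace ℝ (Fin d)) : ℝ :=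
  sSup (range fun ω => f x ω)

/-- `W(x) = {ω ∈ W | f(x, ω) = F(x)}`, the set of active indices. -/
def activeSet (f : EuclideanSpace ℝ (Fin d) → W → ℝ) (x : EuclideanSpace ℝ (Fin d)) : Set W :=
  {ω | f x ω = Fmax f x}

/-- The set of active gradients `{∇ₓ f(x, ω) | ω ∈ W(x)}`. -/
def activeGrads (f : EuclideanSpace ℝ (Fin d) → W → ℝ) (x : EuclideanSpace ℝ (Fin d)) :
    Set (EuclideanSpace ℝ (Fin d)) :=
  (fun ω => gradient (fun z => f z ω) x) '' activeSet f x

/-- The directional derivative `F'(x, h) = max_{ω ∈ W(x)} ⟨∇ₓ f(x, ω), h⟩` of the max-function. -/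
def Fdir (f : EuclideanSpace ℝ (Fin d) → W → ℝ) (x h : EuclideanSpace ℝ (Fin d)) : ℝ :=
  sSup ((fun v => ⟪v, h⟫) '' activeGrads f x)

/-- The Hadamard subdifferential `∂F(x) = co {∇ₓ f(x, ω) | ω ∈ W(x)}` of the max-function. -/
def subdiffF (f : EuclideanSpace ℝ (Fin d) → W → ℝ) (x : EuclideanSpace ℝ (Fin d)) :
    Set (EuclideanSpace ℝ (Fin d)) :=
  convexHull ℝ (activeGrads f x)

/-- The polar cone of a set in `ℝ^d`. -/
def polarCone {d : ℕ} (C : Set (EuclideanSpace ℝ (Fin d))) : Set (EuclideanSpace ℝ (Fin d)) :=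
  {v | ∀ h ∈ C, ⟪v, h⟫ ≤ 0}

/-- The normal cone `N_A(x)` to `A` at `x`, i.e. the polar of the contingent cone. -/
def normalCone {d : ℕ} (A : Set (EuclideanSpace ℝ (Fin d))) (x : EuclideanSpace ℝ (Fin d)) :
    Set (EuclideanSpace ℝ (Fin d)) :=
  polarCone (contingentCone A x)

/-- The polar cone `K* = {y* | ⟨y*, y⟩ ≤ 0 ∀ y ∈ K}` of `K ⊆ Y` in the dual space. -/
def dualPolar (K : Set Y) : Set (Y →L[ℝ] ℝ) :=
  {l | ∀ y ∈ K, l y ≤ 0}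

/-- The cone `𝒩(x) = [DG(x)]*(K* ∩ lin(G(x))^⊥)`. -/
def calN (G : EuclideanSpace ℝ (Fin d) → Y) (K : Set Y) (x : EuclideanSpace ℝ (Fin d)) :
    Set (EuclideanSpace ℝ (Fin d)) :=
  {v | ∃ l : Y →L[ℝ] ℝ, l ∈ dualPolar K ∧ l (G x) = 0 ∧
    ∀ u : EuclideanSpace ℝ (Fin d), ⟪v, u⟫ = l (fderiv ℝ G x u)}

/-- `λ` is a Lagrange multiplier of problem (P) at a feasible point `x`:
`λ ∈ K*`, `⟨λ, G(x)⟩ = 0` and `[L(·,λ)]'(x, h) ≥ 0` for all `h ∈ T_A(x)`, where the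
directional derivative of the Lagrangian equals `F'(x,h) + ⟨λ, DG(x) h⟩`. -/
def IsLagrangeMult (f : EuclideanSpace ℝ (Fin d) → W → ℝ) (G : EuclideanSpace ℝ (Fin d) → Y)
    (K : Set Y) (A : Set (EuclideanSpace ℝ (Fin d))) (x : EuclideanSpace ℝ (Fin d))
    (l : Y →L[ℝ] ℝ) : Prop :=
  l ∈ dualPolar K ∧ l (G x) = 0 ∧
    ∀ h ∈ contingentCone A x, 0 ≤ Fdir f x h + l (fderiv ℝ G x h)

/-- The subdifferential `∂φ(x)` of the distance penalty term `φ(x) = dist(G(x), K)` at a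
feasible point: `{[DG(x)]* y* | ‖y*‖ ≤ 1, ⟨y*, y − G(x)⟩ ≤ 0 ∀ y ∈ K}`. -/
def subdiffPhi (G : EuclideanSpace ℝ (Fin d) → Y) (K : Set Y) (x : EuclideanSpace ℝ (Fin d)) :
    Set (EuclideanSpace ℝ (Fin d)) :=
  {v | ∃ l : Y →L[ℝ] ℝ, ‖l‖ ≤ 1 ∧ (∀ y ∈ K, l (y - G x) ≤ 0) ∧
    ∀ u : EuclideanSpace ℝ (Fin d), ⟪v, u⟫ = l (fderiv ℝ G x u)}

/-- The penalty function `Φ_c(x) = F(x) + c · dist(G(x), K)`. -/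
def penaltyFn (f : EuclideanSpace ℝ (Fin d) → W → ℝ) (G : EuclideanSpace ℝ (Fin d) → Y)
    (K : Set Y) (c : ℝ) (x : EuclideanSpace ℝ (Fin d)) : ℝ :=
  Fmax f x + c * Metric.infDist (G x) K

/-!
Statement 8: for x with G(x) ∈ K and every c ≥ 0, the penalty function
Φ_c(x) = F(x) + c·dist(G(x),K) is Hadamard directionally differentiable at x with
Φ′_c(x,h) = lim_{[α,h′]→[+0,h]} (Φ_c(x+αh′) − Φ_c(x))/α = max_{v ∈ ∂Φ_c(x)} ⟨v,h⟩,
where ∂Φ_c(x) = ∂F(x) + c·∂φ(x), and ∂Φ_c(x) is convex and compact.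
-/



/-- difference of sups bounded by uniform bound -/
lemma abs_csSup_sub_csSup_le {ι : Type*} [Nonempty ι] {φ ψ : ι → ℝ}
    (hφ : BddAbove (range φ)) (hψ : BddAbove (range ψ)) {c : ℝ}
    (hc : ∀ i, |φ i - ψ i| ≤ c) : |sSup (range φ) - sSup (range ψ)| ≤ c := by
  rw [abs_sub_le_iff]
  constructor
  · rw [sub_le_iff_le_add]
    apply csSup_le (range_nonempty φ)
    rintro _ ⟨i, rfl⟩
    have := (abs_sub_le_iff.1 (hc i)).1
    have h2 : ψ i ≤ sSup (range ψ) := le_csSup hψ (mem_range_self i)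
    linarith
  · rw [sub_le_iff_le_add]
    apply csSup_le (range_nonempty ψ)
    rintro _ ⟨i, rfl⟩
    have := (abs_sub_le_iff.1 (hc i)).2
    have h2 : φ i ≤ sSup (range φ) := le_csSup hφ (mem_range_self i)
    linarith

lemma le_infDist' {Y : Type*} [MetricSpace Y] {s : Set Y} (hs : s.Nonempty) {x : Y} {c : ℝ}
    (h : ∀ y ∈ s, c ≤ dist x y) : c ≤ Metric.infDist x s := by
  by_contra hcon
  push_neg at hcon
  obtain ⟨y, hy, hd⟩ := (Metric.infDist_lt_iff hs).1 hcon
  exact absurd hd (not_lt.2 (h y hy))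

/-- Convex hull of a compact set in Euclidean space is compact. -/
lemma isCompact_convexHull_euclidean {d : ℕ} {s : Set (EuclideanSpace ℝ (Fin d))}
    (hs : IsCompact s) : IsCompact (convexHull ℝ s) := by
  classical
  rcases s.eq_empty_or_nonempty with rfl | ⟨s0, hs0⟩
  · simpa [convexHull_empty] using isCompact_empty
  set n := d + 1 with hn
  set T : (Fin n → ℝ) × (Fin n → EuclideanSpace ℝ (Fin d)) → EuclideanSpace ℝ (Fin d) :=
    fun p => ∑ i, p.1 i • p.2 i with hT
  have hTc : Continuous T := by
    apply continuous_finset_sum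
    intro i _
    exact ((continuous_apply i).comp continuous_fst).smul ((continuous_apply i).comp continuous_snd)
  have hD : IsCompact ((stdSimplex ℝ (Fin n)) ×ˢ (Set.pi univ fun _ : Fin n => s)) :=
    (isCompact_stdSimplex _ _).prod (isCompact_univ_pi fun _ => hs)
  have him : convexHull ℝ s = T '' ((stdSimplex ℝ (Fin n)) ×ˢ (Set.pi univ fun _ : Fin n => s)) := by
    apply Subset.antisymm
    · intro x hx
      obtain ⟨ι, hfin, z, w, hzs, hai, hw0, hw1, hsum⟩ := eq_pos_convex_span_of_mem_convexHull hx
      haveI := hfin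
      haveI : Fintype ι := hfin
      have hcard : Fintype.card ι ≤ n := by
        have h1 := hai.card_le_finrank_succ
        have h2 : Module.finrank ℝ (vectorSpan ℝ (Set.range z)) ≤ d := by
          have := Submodule.finrank_le (vectorSpan ℝ (Set.range z))
          simpa [finrank_euclideanSpace_fin] using this
        omega
      obtain ⟨e⟩ : Nonempty (ι ↪ Fin n) := Function.Embedding.nonempty_of_card_le (by simpa using hcard)
      set w' : Fin n → ℝ := fun j => if h : ∃ i, e i = j then w h.choose else 0 with hw'
      set z' : Fin n → EuclideanSpace ℝ (Fin d) :=
        fun j => if h : ∃ i, e i = j then z h.choose else s0 with hz'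
      have hwe : ∀ i, w' (e i) = w i := by
        intro i
        have h : ∃ i', e i' = e i := ⟨i, rfl⟩
        simp only [hw', dif_pos h]
        exact congrArg w (e.injective h.choose_spec)
      have hze : ∀ i, z' (e i) = z i := by
        intro i
        have h : ∃ i', e i' = e i := ⟨i, rfl⟩
        simp only [hz', dif_pos h]
        exact congrArg z (e.injective h.choose_spec)
      have hnotin : ∀ j : Fin n, j ∉ Finset.univ.map e → w' j = 0 := by
        intro j hj
        have : ¬∃ i, e i = j := by
          intro ⟨i, hi⟩; exact hj (Finset.mem_map.2 ⟨i, Finset.mem_univ i, hi⟩)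
        simp only [hw', dif_neg this]
      have hsum_eq : ∀ (F : Fin n → EuclideanSpace ℝ (Fin d)),
          True := fun _ => trivial
      refine ⟨(w', z'), ⟨⟨fun j => ?_, ?_⟩, fun j _ => ?_⟩, ?_⟩
      · by_cases h : ∃ i, e i = j
        · simp only [hw', dif_pos h]; exact (hw0 _).le
        · simp only [hw', dif_neg h]; exact le_rfl
      · have : ∑ j ∈ Finset.univ.map e, w' j = ∑ j, w' j := by
          apply Finset.sum_subset (Finset.subset_univ _)
          intro j _ hj
          exact hnotin j hj
        rw [← this, Finset.sum_map]
        rw [Finset.sum_congr rfl fun i _ => hwe i]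
        convert hw1
      · by_cases h : ∃ i, e i = j
        · simp only [hz', dif_pos h]; exact hzs (mem_range_self _)
        · simp only [hz', dif_neg h]; exact hs0
      · show ∑ j, w' j • z' j = x
        have : ∑ j ∈ Finset.univ.map e, w' j • z' j = ∑ j, w' j • z' j := by
          apply Finset.sum_subset (Finset.subset_univ _)
          intro j _ hj
          rw [hnotin j hj, zero_smul]
        rw [← this, Finset.sum_map]
        rw [Finset.sum_congr rfl fun i _ => by rw [hwe i, hze i]]
        convert hsum
    · rintro _ ⟨⟨wv, zv⟩, ⟨hw, hz⟩, rfl⟩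
      apply (convex_convexHull ℝ s).sum_mem (fun i _ => hw.1 i) hw.2
      intro i _
      exact subset_convexHull ℝ s (hz i (mem_univ i))
  rw [him]
  exact hD.image hTc

lemma inner_left_linear {d : ℕ} (h : EuclideanSpace ℝ (Fin d)) :
    IsLinearMap ℝ (fun v : EuclideanSpace ℝ (Fin d) => ⟪v, h⟫) :=
  ⟨fun a b => inner_add_left a b h, fun c a => real_inner_smul_left a h c⟩

/-- support function of convex hull equals support function of the set -/
lemma sSup_image_inner_convexHull {d : ℕ} {s : Set (EuclideanSpace ℝ (Fin d))}
    (hne : s.Nonempty) (h : EuclideanSpace ℝ (Fin d)) (hbdd : BddAbove ((fun v => ⟪v, h⟫) '' s)) :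
    sSup ((fun v => ⟪v, h⟫) '' (convexHull ℝ s)) = sSup ((fun v => ⟪v, h⟫) '' s) := by
  set M := sSup ((fun v => ⟪v, h⟫) '' s) with hM
  have hsub : convexHull ℝ s ⊆ {v | ⟪v, h⟫ ≤ M} := by
    apply convexHull_min
    · intro v hv
      exact le_csSup hbdd (mem_image_of_mem _ hv)
    · exact convex_halfSpace_le (inner_left_linear h) M
  apply le_antisymm
  · apply csSup_le ((hne.mono (subset_convexHull ℝ s)).image _)
    rintro _ ⟨v, hv, rfl⟩
    exact hsub hv
  · apply csSup_le_csSup _ (hne.image _) (image_mono (subset_convexHull ℝ s))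
    exact ⟨M, by rintro _ ⟨v, hv, rfl⟩; exact hsub hv⟩

lemma image_inner_add {d : ℕ} (S T : Set (EuclideanSpace ℝ (Fin d))) (h : EuclideanSpace ℝ (Fin d)) :
    (fun v => ⟪v, h⟫) '' (S + T) = (fun v => ⟪v, h⟫) '' S + (fun v => ⟪v, h⟫) '' T := by
  ext r
  constructor
  · rintro ⟨_, ⟨a, ha, b, hb, rfl⟩, rfl⟩
    exact ⟨⟪a, h⟫, mem_image_of_mem _ ha, ⟪b, h⟫, mem_image_of_mem _ hb, (inner_add_left a b h).symm⟩
  · rintro ⟨_, ⟨a, ha, rfl⟩, _, ⟨b, hb, rfl⟩, rfl⟩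
    exact ⟨a + b, add_mem_add ha hb, inner_add_left a b h⟩

lemma image_inner_smul_set {d : ℕ} (c : ℝ) (S : Set (EuclideanSpace ℝ (Fin d)))
    (h : EuclideanSpace ℝ (Fin d)) :
    (fun v => ⟪v, h⟫) '' (c • S) = c • ((fun v => ⟪v, h⟫) '' S) := by
  ext r
  constructor
  · rintro ⟨_, ⟨a, ha, rfl⟩, rfl⟩
    exact ⟨⟪a, h⟫, mem_image_of_mem _ ha, (real_inner_smul_left a h c).symm⟩
  · rintro ⟨_, ⟨a, ha, rfl⟩, rfl⟩
    exact ⟨c • a, smul_mem_smul_set ha, real_inner_smul_left a h c⟩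
section SubdiffPhiProps

variable {d : ℕ} {Y : Type*} [NormedAddCommGroup Y] [NormedSpace ℝ Y]
variable (G : EuclideanSpace ℝ (Fin d) → Y) (K : Set Y) (x : EuclideanSpace ℝ (Fin d))

lemma zero_mem_subdiffPhi : (0 : EuclideanSpace ℝ (Fin d)) ∈ subdiffPhi G K x := by
  refine ⟨0, by simp, fun y _ => by simp, fun u => by simp⟩

lemma convex_subdiffPhi : Convex ℝ (subdiffPhi G K x) := by
  rintro v₁ ⟨l₁, hl₁n, hl₁K, hl₁i⟩ v₂ ⟨l₂, hl₂n, hl₂K, hl₂i⟩ a b ha hb hab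
  refine ⟨a • l₁ + b • l₂, ?_, fun y hy => ?_, fun u => ?_⟩
  · calc ‖a • l₁ + b • l₂‖ ≤ ‖a • l₁‖ + ‖b • l₂‖ := norm_add_le _ _
    _ = a * ‖l₁‖ + b * ‖l₂‖ := by rw [norm_smul a l₁, norm_smul b l₂, Real.norm_of_nonneg ha, Real.norm_of_nonneg hb]
    _ ≤ a * 1 + b * 1 := by gcongr <;> assumption
    _ = 1 := by rw [mul_one, mul_one, hab]
  · have h1 := hl₁K y hy
    have h2 := hl₂K y hy
    simp only [ContinuousLinearMap.add_apply, ContinuousLinearMap.coe_smul', Pi.smul_apply,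
      smul_eq_mul]
    nlinarith
  · simp only [ContinuousLinearMap.add_apply, ContinuousLinearMap.coe_smul', Pi.smul_apply,
      smul_eq_mul, inner_add_left]
    rw [real_inner_smul_left, real_inner_smul_left, hl₁i u, hl₂i u]

lemma isCompact_subdiffPhi : IsCompact (subdiffPhi G K x) := by
  classical
  set DG := fderiv ℝ G x with hDG
  set Φ : WeakDual ℝ Y → EuclideanSpace ℝ (Fin d) :=
    fun l => ∑ i, l (DG (EuclideanSpace.single i (1:ℝ))) • EuclideanSpace.single i (1:ℝ) with hΦ
  have hΦc : Continuous Φ := by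
    apply continuous_finset_sum
    intro i _
    exact (WeakDual.eval_continuous _).smul continuous_const
  have hΦinner : ∀ (l : WeakDual ℝ Y) (u : EuclideanSpace ℝ (Fin d)),
      ⟪Φ l, u⟫ = l (DG u) := by
    intro l u
    have hu : u = ∑ i, u i • EuclideanSpace.single i (1:ℝ) := by
      ext j
      rw [WithLp.ofLp_sum, Finset.sum_apply]
      simp [EuclideanSpace.single_apply, mul_comm]
    calc ⟪Φ l, u⟫ = ∑ i, l (DG (EuclideanSpace.single i (1:ℝ))) * ⟪EuclideanSpace.single i (1:ℝ), u⟫ := by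
          rw [hΦ]; rw [sum_inner]; exact Finset.sum_congr rfl fun i _ => real_inner_smul_left _ _ _
    _ = ∑ i, u i * l (DG (EuclideanSpace.single i (1:ℝ))) := by
          apply Finset.sum_congr rfl
          intro i _
          rw [EuclideanSpace.inner_single_left]
          simp [mul_comm]
    _ = l (DG u) := by
          conv_rhs => rw [hu]
          rw [map_sum, map_sum]
          apply Finset.sum_congr rfl
          intro i _
          rw [map_smul, map_smul]
          simp
  set C : Set (WeakDual ℝ Y) :=
    (WeakDual.toStrongDual ⁻¹' Metric.closedBall 0 1) ∩ {l | ∀ y ∈ K, l (y - G x) ≤ 0} with hC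
  have hCcomp : IsCompact C := by
    apply (WeakDual.isCompact_closedBall (0 : StrongDual ℝ Y) 1).inter_right
    have : {l : WeakDual ℝ Y | ∀ y ∈ K, l (y - G x) ≤ 0} =
        ⋂ y ∈ K, {l : WeakDual ℝ Y | l (y - G x) ≤ 0} := by
      ext l; simp
    rw [this]
    exact isClosed_biInter fun y _ => isClosed_le (WeakDual.eval_continuous _) continuous_const
  have him : subdiffPhi G K x = Φ '' C := by
    ext v
    constructor
    · rintro ⟨l, hln, hlK, hli⟩
      refine ⟨StrongDual.toWeakDual l, ⟨?_, ?_⟩, ?_⟩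
      · simp only [mem_preimage, Metric.mem_closedBall, dist_zero_right]
        exact hln
      · exact hlK
      · apply ext_inner_right ℝ
        intro u
        rw [hΦinner]
        exact (hli u).symm
    · rintro ⟨l, ⟨hln, hlK⟩, rfl⟩
      refine ⟨WeakDual.toStrongDual l, ?_, hlK, fun u => hΦinner l u⟩
      simpa [dist_zero_right] using hln
  rw [him]
  exact hCcomp.image hΦc

end SubdiffPhiProps
section Danskin

variable {d : ℕ} {W : Type*} [TopologicalSpace W] [CompactSpace W] [Nonempty W]
variable {f : EuclideanSpace ℝ (Fin d) → W → ℝ} {x : EuclideanSpace ℝ (Fin d)}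

lemma continuous_slice (hfc : Continuous fun p : EuclideanSpace ℝ (Fin d) × W => f p.1 p.2)
    (z : EuclideanSpace ℝ (Fin d)) : Continuous (f z) :=
  hfc.comp (continuous_const.prodMk continuous_id)

lemma continuous_gradslice
    (hfg : Continuous fun p : EuclideanSpace ℝ (Fin d) × W => gradient (fun z => f z p.2) p.1) :
    Continuous fun ω => gradient (fun z => f z ω) x :=
  hfg.comp (continuous_const.prodMk continuous_id)

lemma le_Fmax (hfc : Continuous fun p : EuclideanSpace ℝ (Fin d) × W => f p.1 p.2) (ω : W) :
    f x ω ≤ Fmax f x :=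
  le_csSup (isCompact_range (continuous_slice hfc x)).bddAbove (mem_range_self ω)

lemma isCompact_activeSet (hfc : Continuous fun p : EuclideanSpace ℝ (Fin d) × W => f p.1 p.2) :
    IsCompact (activeSet f x) :=
  (isClosed_eq (continuous_slice hfc x) continuous_const).isCompact

lemma nonempty_activeSet (hfc : Continuous fun p : EuclideanSpace ℝ (Fin d) × W => f p.1 p.2) :
    (activeSet f x).Nonempty := by
  obtain ⟨ω₀, -, hω₀⟩ := isCompact_univ.exists_isMaxOn univ_nonempty
    (continuous_slice hfc x).continuousOn
  refine ⟨ω₀, le_antisymm (le_Fmax hfc ω₀) ?_⟩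
  apply csSup_le (range_nonempty _)
  rintro _ ⟨ω, rfl⟩
  exact hω₀ (mem_univ ω)

lemma isCompact_activeGrads (hfc : Continuous fun p : EuclideanSpace ℝ (Fin d) × W => f p.1 p.2)
    (hfg : Continuous fun p : EuclideanSpace ℝ (Fin d) × W => gradient (fun z => f z p.2) p.1) :
    IsCompact (activeGrads f x) :=
  (isCompact_activeSet hfc).image (continuous_gradslice hfg)

lemma nonempty_activeGrads (hfc : Continuous fun p : EuclideanSpace ℝ (Fin d) × W => f p.1 p.2) :
    (activeGrads f x).Nonempty :=
  (nonempty_activeSet hfc).image _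

/-- uniform first-order estimate -/
lemma key_estimate (hfdiff : ∀ ω, Differentiable ℝ (fun z => f z ω))
    (hfg : Continuous fun p : EuclideanSpace ℝ (Fin d) × W => gradient (fun z => f z p.2) p.1)
    {ε : ℝ} (hε : 0 < ε) :
    ∃ δ > 0, ∀ u : EuclideanSpace ℝ (Fin d), ‖u‖ ≤ δ → ∀ ω,
      |f (x + u) ω - f x ω - ⟪gradient (fun z => f z ω) x, u⟫| ≤ ε * ‖u‖ := by
  set q : EuclideanSpace ℝ (Fin d) × W → ℝ := fun p =>
    ‖gradient (fun z => f z p.2) p.1 - gradient (fun z => f z p.2) x‖ with hq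
  have hqc : Continuous q := by
    apply Continuous.norm
    exact hfg.sub ((continuous_gradslice (x := x) hfg).comp continuous_snd)
  have hNopen : IsOpen {p : EuclideanSpace ℝ (Fin d) × W | q p < ε} := isOpen_lt hqc continuous_const
  have hsub : ({x} : Set (EuclideanSpace ℝ (Fin d))) ×ˢ (univ : Set W) ⊆ {p | q p < ε} := by
    rintro ⟨z, ω⟩ ⟨hz, -⟩
    simp only [mem_singleton_iff] at hz
    subst hz
    simpa [hq] using hε
  obtain ⟨U, V, hUo, hVo, hxU, hVuniv, hUV⟩ :=
    generalized_tube_lemma isCompact_singleton isCompact_univ hNopen hsub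
  obtain ⟨δ', hδ'pos, hball⟩ := Metric.mem_nhds_iff.1 (hUo.mem_nhds (hxU rfl))
  refine ⟨δ'/2, by positivity, ?_⟩
  intro u hu ω
  set g0 : EuclideanSpace ℝ (Fin d) := gradient (fun z => f z ω) x with hg0
  set φ : EuclideanSpace ℝ (Fin d) → ℝ := fun y => f y ω - (InnerProductSpace.toDual ℝ (EuclideanSpace ℝ (Fin d)) g0) y with hφ
  have hcb : Metric.closedBall x (δ'/2) ⊆ U :=
    (Metric.closedBall_subset_ball (by linarith)).trans hball
  have hder : ∀ y ∈ Metric.closedBall x (δ'/2),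
      HasFDerivWithinAt φ
        ((InnerProductSpace.toDual ℝ (EuclideanSpace ℝ (Fin d))) (gradient (fun z => f z ω) y)
          - (InnerProductSpace.toDual ℝ (EuclideanSpace ℝ (Fin d))) g0) (Metric.closedBall x (δ'/2)) y := by
    intro y _
    exact (((hfdiff ω y).hasGradientAt.hasFDerivAt).sub
      ((InnerProductSpace.toDual ℝ (EuclideanSpace ℝ (Fin d)) g0).hasFDerivAt)).hasFDerivWithinAt
  have hbound : ∀ y ∈ Metric.closedBall x (δ'/2),
      ‖(InnerProductSpace.toDual ℝ (EuclideanSpace ℝ (Fin d))) (gradient (fun z => f z ω) y)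
          - (InnerProductSpace.toDual ℝ (EuclideanSpace ℝ (Fin d))) g0‖ ≤ ε := by
    intro y hy
    rw [← map_sub]
    rw [LinearIsometryEquiv.norm_map]
    have : (y, ω) ∈ {p : EuclideanSpace ℝ (Fin d) × W | q p < ε} := hUV ⟨hcb hy, hVuniv (mem_univ ω)⟩
    exact le_of_lt this
  have hmem1 : x ∈ Metric.closedBall x (δ'/2) := Metric.mem_closedBall_self (by positivity)
  have hmem2 : x + u ∈ Metric.closedBall x (δ'/2) := by
    rw [Metric.mem_closedBall, dist_eq_norm, add_sub_cancel_left]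
    exact hu
  have hmvt := Convex.norm_image_sub_le_of_norm_hasFDerivWithin_le hder hbound
    (convex_closedBall x (δ'/2)) hmem1 hmem2
  rw [add_sub_cancel_left] at hmvt
  have hval : φ (x + u) - φ x = f (x + u) ω - f x ω - ⟪g0, u⟫ := by
    simp only [hφ, InnerProductSpace.toDual_apply_apply]
    rw [inner_add_right]
    ring
  calc |f (x + u) ω - f x ω - ⟪g0, u⟫| = ‖φ (x + u) - φ x‖ := by
        rw [hval, Real.norm_eq_abs]
  _ ≤ ε * ‖u‖ := hmvt

lemma danskin_tendsto (hfdiff : ∀ ω, Differentiable ℝ (fun z => f z ω))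
    (hfc : Continuous fun p : EuclideanSpace ℝ (Fin d) × W => f p.1 p.2)
    (hfg : Continuous fun p : EuclideanSpace ℝ (Fin d) × W => gradient (fun z => f z p.2) p.1)
    (h : EuclideanSpace ℝ (Fin d)) :
    Tendsto (fun p : ℝ × EuclideanSpace ℝ (Fin d) =>
        (Fmax f (x + p.1 • p.2) - Fmax f x) / p.1)
      ((𝓝[>] (0:ℝ)) ×ˢ (𝓝 h)) (𝓝 (Fdir f x h)) := by
  classical
  set g : W → EuclideanSpace ℝ (Fin d) := fun ω => gradient (fun z => f z ω) x with hgdef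
  have hgc : Continuous g := continuous_gradslice hfg
  -- bound on gradients
  obtain ⟨M₀, hM₀⟩ := (isCompact_range hgc.norm).bddAbove
  set M := M₀ + 1 with hM
  have hMpos : 0 < M := by
    have : (0:ℝ) ≤ M₀ := le_trans (norm_nonneg (g (Classical.arbitrary W)))
      (hM₀ (mem_range_self _))
    linarith
  have hgM : ∀ ω, ‖g ω‖ ≤ M := fun ω => le_trans (hM₀ (mem_range_self ω)) (by linarith)
  -- bddAbove facts
  have hbdd : ∀ (a : ℝ) (u : EuclideanSpace ℝ (Fin d)), BddAbove (range fun ω => f x ω + a * ⟪g ω, u⟫) := by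
    intro a u
    exact (isCompact_range ((continuous_slice hfc x).add
      (continuous_const.mul (hgc.inner continuous_const)))).bddAbove
  have hbddF : ∀ z : EuclideanSpace ℝ (Fin d), BddAbove (range fun ω => f z ω) := fun z =>
    (isCompact_range (continuous_slice hfc z)).bddAbove
  -- Fdir facts
  have hΓ : IsCompact ((fun v => ⟪v, h⟫) '' activeGrads f x) :=
    (isCompact_activeGrads hfc hfg).image (continuous_id.inner continuous_const)
  have hΓne : ((fun v => ⟪v, h⟫) '' activeGrads f x).Nonempty :=
    (nonempty_activeGrads hfc).image _
  have hFdmem : Fdir f x h ∈ (fun v => ⟪v, h⟫) '' activeGrads f x := hΓ.sSup_mem hΓne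
  obtain ⟨_, ⟨ωm, hωm, rfl⟩, hωmval⟩ := hFdmem
  have hFd_ub : ∀ ω ∈ activeSet f x, ⟪g ω, h⟫ ≤ Fdir f x h := by
    intro ω hω
    exact le_csSup hΓ.bddAbove ⟨g ω, mem_image_of_mem _ hω, rfl⟩
  -- upper estimate for fixed h
  have upper : ∀ ε' > (0:ℝ), ∃ δ₂ > (0:ℝ), ∀ α, 0 < α → α ≤ δ₂ →
      sSup (range fun ω => f x ω + α * ⟪g ω, h⟫) ≤ Fmax f x + α * (Fdir f x h + ε') := by
    intro ε' hε'
    set U := {ω | ⟪g ω, h⟫ < Fdir f x h + ε'} with hU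
    have hUopen : IsOpen U := isOpen_lt (hgc.inner continuous_const) continuous_const
    have hWU : activeSet f x ⊆ U := fun ω hω => lt_of_le_of_lt (hFd_ub ω hω) (by linarith)
    by_cases hS : (Uᶜ : Set W).Nonempty
    · obtain ⟨ω₁, hω₁S, hω₁max⟩ := (hUopen.isClosed_compl.isCompact).exists_isMaxOn hS
        (continuous_slice hfc x).continuousOn
      have hm : f x ω₁ < Fmax f x := by
        rcases lt_or_eq_of_le (le_Fmax (x := x) hfc ω₁) with hlt | heq
        · exact hlt
        · exact absurd (hWU heq) hω₁S
      set C := M * ‖h‖ + |Fdir f x h| + ε' + 1 with hC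
      have hCpos : 0 < C := by positivity
      refine ⟨(Fmax f x - f x ω₁)/C, div_pos (by linarith) hCpos, ?_⟩
      intro α hα hαle
      apply csSup_le (range_nonempty _)
      rintro _ ⟨ω, rfl⟩
      show f x ω + α * ⟪g ω, h⟫ ≤ Fmax f x + α * (Fdir f x h + ε')
      by_cases hω : ω ∈ U
      · have hlt : ⟪g ω, h⟫ < Fdir f x h + ε' := hω
        have h1 : f x ω ≤ Fmax f x := le_Fmax hfc ω
        nlinarith [mul_lt_mul_of_pos_left hlt hα]
      · have h1 : f x ω ≤ f x ω₁ := hω₁max hω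
        have h2 : |⟪g ω, h⟫| ≤ M * ‖h‖ :=
          (abs_real_inner_le_norm _ _).trans (by gcongr; exact hgM ω)
        have h3 : α * C ≤ Fmax f x - f x ω₁ := (le_div_iff₀ hCpos).1 hαle
        have h4 : ⟪g ω, h⟫ - (Fdir f x h + ε') ≤ C := by
          have := le_abs_self (Fdir f x h)
          have := neg_abs_le (Fdir f x h)
          have := le_abs_self (⟪g ω, h⟫)
          have := abs_nonneg (⟪g ω, h⟫)
          nlinarith
        nlinarith
    · rw [not_nonempty_iff_eq_empty] at hS
      refine ⟨1, one_pos, ?_⟩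
      intro α hα _
      apply csSup_le (range_nonempty _)
      rintro _ ⟨ω, rfl⟩
      show f x ω + α * ⟪g ω, h⟫ ≤ Fmax f x + α * (Fdir f x h + ε')
      have hω : ω ∈ U := by
        by_contra hc
        exact absurd (mem_compl hc) (by rw [hS]; exact notMem_empty ω)
      have hlt : ⟪g ω, h⟫ < Fdir f x h + ε' := hω
      have h1 : f x ω ≤ Fmax f x := le_Fmax hfc ω
      nlinarith [mul_lt_mul_of_pos_left hlt hα]
  -- main ε-argument
  rw [Metric.tendsto_nhds]
  intro ε hε
  set ε' := ε/8 with hε'def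
  have hε' : 0 < ε' := by positivity
  have hh1 : (0:ℝ) < ‖h‖ + 1 := by positivity
  obtain ⟨δ₁, hδ₁pos, hkey⟩ := key_estimate (x := x) hfdiff hfg (div_pos hε' hh1)
  obtain ⟨δ₂, hδ₂pos, hupper⟩ := upper ε' hε'
  set δm := min (δ₁/(‖h‖+1)) δ₂ with hδm
  have hδmpos : 0 < δm := lt_min (div_pos hδ₁pos hh1) hδ₂pos
  set r := min 1 (ε'/M) with hr
  have hrpos : 0 < r := lt_min one_pos (div_pos hε' hMpos)
  have hev1 : ∀ᶠ α in 𝓝[>](0:ℝ), α ∈ Ioc 0 δm :=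
    Ioc_mem_nhdsGT_of_mem ⟨le_refl 0, hδmpos⟩
  have hev2 : ∀ᶠ u in 𝓝 h, dist u h < r := by
    filter_upwards [Metric.ball_mem_nhds h hrpos] with u hu using Metric.mem_ball.mp hu
  filter_upwards [hev1.prod_mk hev2] with p hp
  obtain ⟨⟨hα0, hαδ⟩, hdist⟩ := hp
  set α := p.1
  set u := p.2
  have hur : ‖u - h‖ < r := by rwa [dist_eq_norm] at hdist
  have hu1 : ‖u‖ ≤ ‖h‖ + 1 := by
    calc ‖u‖ = ‖h + (u - h)‖ := by rw [add_sub_cancel]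
    _ ≤ ‖h‖ + ‖u - h‖ := norm_add_le _ _
    _ ≤ ‖h‖ + 1 := by have := min_le_left 1 (ε'/M); linarith [hur.le.trans this]
  set A := Fmax f (x + α • u) with hA
  set ψu := sSup (range fun ω => f x ω + α * ⟪g ω, u⟫) with hψu
  set ψh := sSup (range fun ω => f x ω + α * ⟪g ω, h⟫) with hψh
  set Fx := Fmax f x with hFx
  set Fd := Fdir f x h with hFd
  have hαδ₁ : α * (‖h‖ + 1) ≤ δ₁ := by
    have h1 : α ≤ δ₁/(‖h‖+1) := le_trans hαδ (min_le_left _ _)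
    calc α * (‖h‖+1) ≤ (δ₁/(‖h‖+1)) * (‖h‖+1) := by gcongr
    _ = δ₁ := by field_simp
  -- term 1
  have t1 : |A - ψu| ≤ ε' * α := by
    have hnorm : ‖α • u‖ ≤ δ₁ := by
      rw [norm_smul, Real.norm_of_nonneg hα0.le]
      calc α * ‖u‖ ≤ α * (‖h‖+1) := by gcongr
      _ ≤ δ₁ := hαδ₁
    have hkey2 := hkey (α • u) hnorm
    have := abs_csSup_sub_csSup_le (φ := fun ω => f (x + α • u) ω)
      (ψ := fun ω => f x ω + α * ⟪g ω, u⟫) (hbddF (x + α • u))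
      (hbdd α u) (c := (ε'/(‖h‖+1)) * ‖α • u‖) ?_
    · refine this.trans ?_
      rw [norm_smul, Real.norm_of_nonneg hα0.le]
      calc (ε'/(‖h‖+1)) * (α * ‖u‖) ≤ (ε'/(‖h‖+1)) * (α * (‖h‖+1)) := by
            gcongr
      _ = ε' * α := by field_simp
    · intro ω
      have := hkey2 ω
      have heq : f (x + α • u) ω - (f x ω + α * ⟪g ω, u⟫)
          = f (x + α • u) ω - f x ω - ⟪g ω, α • u⟫ := by
        rw [real_inner_smul_right]; ring
      rw [heq]
      exact this
  -- term 2
  have t2 : |ψu - ψh| ≤ ε' * α := by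
    have := abs_csSup_sub_csSup_le (φ := fun ω => f x ω + α * ⟪g ω, u⟫)
      (ψ := fun ω => f x ω + α * ⟪g ω, h⟫) (hbdd α u) (hbdd α h)
      (c := α * (M * ‖u - h‖)) ?_
    · refine this.trans ?_
      have hMr : M * ‖u - h‖ ≤ ε' := by
        have h1 : ‖u - h‖ ≤ ε'/M := hur.le.trans (min_le_right _ _)
        calc M * ‖u - h‖ ≤ M * (ε'/M) := by gcongr
        _ = ε' := by field_simp
      calc α * (M * ‖u - h‖) ≤ α * ε' := by gcongr
      _ = ε' * α := by ring
    · intro ω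
      have heq : f x ω + α * ⟪g ω, u⟫ - (f x ω + α * ⟪g ω, h⟫) = α * ⟪g ω, u - h⟫ := by
        rw [inner_sub_right]; ring
      rw [heq, abs_mul, abs_of_pos hα0]
      gcongr
      exact (abs_real_inner_le_norm _ _).trans (by gcongr; exact hgM ω)
  -- term 3
  have lower3 : Fx + α * Fd ≤ ψh := by
    have h5 : f x ωm + α * ⟪g ωm, h⟫ ≤ ψh := le_csSup (hbdd α h) (mem_range_self ωm)
    have e : f x ωm = Fx := hωm
    have e2 : ⟪g ωm, h⟫ = Fd := hωmval
    rw [e, e2] at h5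
    exact h5
  have upper3 : ψh ≤ Fx + α * (Fd + ε') := hupper α hα0 (hαδ.trans (min_le_right _ _))
  have t3 : |(ψh - Fx)/α - Fd| ≤ ε' := by
    rw [abs_le]
    constructor
    · have : Fd ≤ (ψh - Fx)/α := by rw [le_div_iff₀ hα0]; linarith
      linarith
    · have : (ψh - Fx)/α ≤ Fd + ε' := by rw [div_le_iff₀ hα0]; linarith
      linarith
  show dist ((A - Fx)/α) Fd < ε
  rw [Real.dist_eq]
  have e1 : (A - Fx)/α - Fd = ((A - ψu) + (ψu - ψh))/α + ((ψh - Fx)/α - Fd) := by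
    field_simp
    ring
  have habs : |(A - Fx)/α - Fd| ≤ (|A - ψu| + |ψu - ψh|)/α + |(ψh - Fx)/α - Fd| := by
    rw [e1]
    refine (abs_add_le _ _).trans ?_
    apply add_le_add _ le_rfl
    rw [abs_div, abs_of_pos hα0]
    gcongr
    exact abs_add_le _ _
  have h6 : (|A - ψu| + |ψu - ψh|)/α ≤ (ε'*α + ε'*α)/α := by gcongr
  have h7 : (ε'*α + ε'*α)/α = 2*ε' := by field_simp; ring
  have : |(A - Fx)/α - Fd| ≤ 3*ε' := by
    rw [h7] at h6
    linarith
  have : (3:ℝ)*ε' < ε := by rw [hε'def]; linarith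
  linarith

end Danskin
section DistPart

variable {d : ℕ} {Y : Type*} [NormedAddCommGroup Y] [NormedSpace ℝ Y]

lemma abs_infDist_sub_le (a b : Y) (K : Set Y) :
    |Metric.infDist a K - Metric.infDist b K| ≤ dist a b := by
  rw [abs_sub_le_iff]
  constructor
  · have := Metric.infDist_le_infDist_add_dist (x := a) (y := b) (s := K)
    linarith
  · have := Metric.infDist_le_infDist_add_dist (x := b) (y := a) (s := K)
    rw [dist_comm] at this
    linarith

set_option maxHeartbeats 1200000 in
lemma distpart_tendsto (K : Set Y) (G : EuclideanSpace ℝ (Fin d) → Y)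
    {x : EuclideanSpace ℝ (Fin d)} (hKconv : Convex ℝ K)
    (hG : DifferentiableAt ℝ G x) (hxK : G x ∈ K) (h : EuclideanSpace ℝ (Fin d)) :
    Tendsto (fun p : ℝ × EuclideanSpace ℝ (Fin d) =>
        Metric.infDist (G (x + p.1 • p.2)) K / p.1)
      ((𝓝[>] (0:ℝ)) ×ˢ (𝓝 h))
      (𝓝 (sSup ((fun v => ⟪v, h⟫) '' subdiffPhi G K x))) := by
  classical
  have hKne : K.Nonempty := ⟨G x, hxK⟩
  set DG := fderiv ℝ G x with hDGdef
  set w := DG h with hwdef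
  set σ := sSup ((fun v => ⟪v, h⟫) '' subdiffPhi G K x) with hσdef
  have h0mem : (0:ℝ) ∈ (fun v => ⟪v, h⟫) '' subdiffPhi G K x :=
    ⟨0, zero_mem_subdiffPhi G K x, inner_zero_left h⟩
  have hbddσ : BddAbove ((fun v => ⟪v, h⟫) '' subdiffPhi G K x) := by
    refine ⟨‖w‖, ?_⟩
    rintro _ ⟨v, ⟨l, hl1, hl2, hl3⟩, rfl⟩
    show (⟪v, h⟫ : ℝ) ≤ ‖w‖
    rw [hl3 h]
    calc l (DG h) ≤ ‖l (DG h)‖ := le_abs_self _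
    _ ≤ ‖l‖ * ‖DG h‖ := l.le_opNorm _
    _ ≤ 1 * ‖w‖ := by rw [← hwdef]; gcongr
    _ = ‖w‖ := one_mul _
  have hσ0 : 0 ≤ σ := le_csSup hbddσ h0mem
  have hσne : ((fun v => ⟪v, h⟫) '' subdiffPhi G K x).Nonempty := ⟨0, h0mem⟩
  set D : ℝ → ℝ := fun α => Metric.infDist (G x + α • w) K / α with hD
  have hDnn : ∀ α, 0 < α → 0 ≤ D α := fun α hα =>
    div_nonneg Metric.infDist_nonneg hα.le
  -- lower bound : σ ≤ D α
  have hσle : ∀ α, 0 < α → σ ≤ D α := by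
    intro α hα
    apply csSup_le hσne
    rintro _ ⟨v, ⟨l, hl1, hl2, hl3⟩, rfl⟩
    show (⟪v, h⟫ : ℝ) ≤ D α
    rw [hl3 h]
    show l w ≤ D α
    rw [hD, le_div_iff₀ hα]
    apply le_infDist' hKne
    intro y hy
    have e1 : l w * α = l (G x + α • w - y) + l (y - G x) := by
      rw [← map_add]
      have e : G x + α • w - y + (y - G x) = α • w := by abel
      rw [e, map_smul, smul_eq_mul, mul_comm]
    have e2 : l (y - G x) ≤ 0 := hl2 y hy
    have e3 : l (G x + α • w - y) ≤ ‖G x + α • w - y‖ :=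
      (le_abs_self _).trans ((l.le_opNorm _).trans (by
        calc ‖l‖ * ‖G x + α • w - y‖ ≤ 1 * ‖G x + α • w - y‖ := by gcongr
        _ = _ := one_mul _))
    rw [dist_eq_norm]
    linarith
  -- monotonicity of D
  have hmono : ∀ α β, 0 < α → α ≤ β → D α ≤ D β := by
    intro α β hα hαβ
    have hβ : (0:ℝ) < β := lt_of_lt_of_le hα hαβ
    set t := α / β with ht
    have ht0 : 0 < t := div_pos hα hβ
    have key : Metric.infDist (G x + α • w) K ≤ t * Metric.infDist (G x + β • w) K := by
      apply le_of_forall_pos_le_add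
      intro ε hεp
      have hlt : Metric.infDist (G x + β • w) K < Metric.infDist (G x + β • w) K + ε/t :=
        lt_add_of_pos_right _ (div_pos hεp ht0)
      obtain ⟨y, hy, hdy⟩ := (Metric.infDist_lt_iff hKne).1 hlt
      have hy' : G x + t • (y - G x) ∈ K := by
        have hmem := hKconv hxK hy (by
          have : t ≤ 1 := (div_le_one hβ).2 hαβ
          linarith : (0:ℝ) ≤ 1 - t) ht0.le (by ring)
        have e : (1 - t) • G x + t • y = G x + t • (y - G x) := by
          module
        rwa [e] at hmem
      have hαt : α = t * β := (div_mul_cancel₀ α hβ.ne').symm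
      calc Metric.infDist (G x + α • w) K ≤ dist (G x + α • w) (G x + t • (y - G x)) :=
            Metric.infDist_le_dist_of_mem hy'
      _ = t * dist (G x + β • w) y := by
          rw [dist_eq_norm, dist_eq_norm]
          have e : G x + α • w - (G x + t • (y - G x)) = t • (G x + β • w - y) := by
            rw [hαt]; module
          rw [e, norm_smul, Real.norm_of_nonneg ht0.le]
      _ ≤ t * (Metric.infDist (G x + β • w) K + ε/t) := by gcongr
      _ = t * Metric.infDist (G x + β • w) K + ε := by field_simp [mul_comm]
    calc D α = Metric.infDist (G x + α • w) K / α := rfl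
    _ ≤ (t * Metric.infDist (G x + β • w) K) / α := by gcongr
    _ = D β := by rw [hD, ht]; field_simp
  -- the generated cone
  set T₀ : Set Y := {z | ∃ t : ℝ, 0 ≤ t ∧ ∃ y ∈ K, z = t • (y - G x)} with hT₀
  have h0T0 : (0:Y) ∈ T₀ := ⟨0, le_rfl, G x, hxK, by simp⟩
  have hKT0 : ∀ y ∈ K, y - G x ∈ T₀ := fun y hy => ⟨1, zero_le_one, y, hy, by simp⟩
  have hT0scale : ∀ s : ℝ, 0 ≤ s → ∀ z ∈ T₀, s • z ∈ T₀ := by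
    rintro s hs z ⟨t, ht, y, hy, rfl⟩
    exact ⟨s * t, by positivity, y, hy, smul_smul s t _⟩
  have hT0conv : Convex ℝ T₀ := by
    rintro z₁ ⟨t₁, ht₁, y₁, hy₁, rfl⟩ z₂ ⟨t₂, ht₂, y₂, hy₂, rfl⟩ a b ha hb hab
    by_cases hτ : a * t₁ + b * t₂ = 0
    · have h1 : a * t₁ = 0 := by nlinarith [mul_nonneg ha ht₁, mul_nonneg hb ht₂]
      have h2 : b * t₂ = 0 := by nlinarith [mul_nonneg ha ht₁, mul_nonneg hb ht₂]
      refine ⟨0, le_rfl, G x, hxK, ?_⟩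
      rw [smul_smul, smul_smul, h1, h2]
      simp
    · have hτpos : 0 < a * t₁ + b * t₂ :=
        lt_of_le_of_ne (by positivity) (Ne.symm hτ)
      refine ⟨a * t₁ + b * t₂, hτpos.le,
        (a * t₁ / (a * t₁ + b * t₂)) • y₁ + (b * t₂ / (a * t₁ + b * t₂)) • y₂, ?_, ?_⟩
      · exact hKconv hy₁ hy₂ (by positivity) (by positivity) (by field_simp)
      · have hτ' : a * t₁ + b * t₂ ≠ 0 := hτpos.ne'
        match_scalars <;> (field_simp; try ring)
  -- J = inf of D
  have hJbdd : BddBelow (D '' Ioi 0) := by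
    refine ⟨0, ?_⟩
    rintro _ ⟨α, hα, rfl⟩
    exact hDnn α hα
  have hJne : (D '' Ioi 0).Nonempty := ⟨D 1, 1, mem_Ioi.2 one_pos, rfl⟩
  set J := sInf (D '' Ioi 0) with hJ
  have hJle : ∀ z ∈ T₀, J ≤ ‖w - z‖ := by
    rintro _ ⟨t, ht, y, hy, rfl⟩
    rcases eq_or_lt_of_le ht with heq | htpos
    · have hz : (t : ℝ) • (y - G x) = 0 := by rw [← heq, zero_smul]
      rw [hz, sub_zero]
      have h1 : J ≤ D 1 := csInf_le hJbdd ⟨1, mem_Ioi.2 one_pos, rfl⟩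
      have h2 : D 1 ≤ ‖w‖ := by
        rw [hD]
        simp only [one_smul, div_one]
        calc Metric.infDist (G x + w) K ≤ dist (G x + w) (G x) :=
              Metric.infDist_le_dist_of_mem hxK
        _ = ‖w‖ := by rw [dist_eq_norm, add_sub_cancel_left]
      linarith
    · have hαpos : (0:ℝ) < t⁻¹ := inv_pos.2 htpos
      have h1 : J ≤ D t⁻¹ := csInf_le hJbdd ⟨t⁻¹, mem_Ioi.2 hαpos, rfl⟩
      have h2 : D t⁻¹ ≤ ‖w - t • (y - G x)‖ := by
        rw [hD, div_le_iff₀ hαpos]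
        calc Metric.infDist (G x + t⁻¹ • w) K ≤ dist (G x + t⁻¹ • w) y :=
              Metric.infDist_le_dist_of_mem hy
        _ = ‖G x + t⁻¹ • w - y‖ := dist_eq_norm _ _
        _ = ‖w - t • (y - G x)‖ * t⁻¹ := by
            have e : w - t • (y - G x) = t • (G x + t⁻¹ • w - y) := by
              have ht' : t ≠ 0 := htpos.ne'
              match_scalars <;> (field_simp; try ring)
            rw [e, norm_smul, Real.norm_of_nonneg htpos.le]
            field_simp
      linarith
  -- J ≤ σ via Hahn-Banach
  have hJσ : J ≤ σ := by
    by_contra hcon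
    push_neg at hcon
    have hJpos : 0 < J := lt_of_le_of_lt hσ0 hcon
    set ρ := (σ + J)/2 with hρ
    have hρpos : 0 < ρ := by rw [hρ]; linarith
    have hρltJ : ρ < J := by rw [hρ]; linarith
    have hσltρ : σ < ρ := by rw [hρ]; linarith
    have hdisj : Disjoint (Metric.ball w ρ) T₀ := by
      rw [Set.disjoint_left]
      intro z hz hzT
      have h1 := hJle z hzT
      have h2 : ‖w - z‖ < ρ := by
        rw [Metric.mem_ball, dist_eq_norm] at hz
        rwa [norm_sub_rev]
      linarith
    obtain ⟨φ, uu, hball, hT⟩ :=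
      geometric_hahn_banach_open (convex_ball w ρ) Metric.isOpen_ball hT0conv hdisj
    have hu0 : uu ≤ 0 := by simpa using hT 0 h0T0
    have hφpos : ∀ z ∈ T₀, 0 ≤ φ z := by
      intro z hz
      by_contra hneg
      push_neg at hneg
      have hφz : 0 < -φ z := by linarith
      have hs : (0:ℝ) ≤ (|uu| + 1)/(-φ z) := le_of_lt (div_pos (by positivity) hφz)
      have h5 := hT _ (hT0scale _ hs z hz)
      rw [map_smul, smul_eq_mul] at h5
      have h6 : (|uu| + 1)/(-φ z) * φ z = -(|uu| + 1) := by
        rw [div_mul_eq_mul_div, div_eq_iff (by linarith : -φ z ≠ 0)]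
        ring
      rw [h6] at h5
      have := neg_abs_le uu
      linarith [abs_nonneg uu]
    have hφw : φ w < uu := hball w (Metric.mem_ball_self hρpos)
    have hφne : φ ≠ 0 := by
      intro h0
      rw [h0] at hφw
      simp only [ContinuousLinearMap.zero_apply] at hφw
      linarith
    have hnφ : 0 < ‖φ‖ := norm_pos_iff.2 hφne
    set ρ' := (σ + ρ)/2 with hρ'
    have hρ'pos : 0 < ρ' := by rw [hρ']; linarith
    have hρ'ltρ : ρ' < ρ := by rw [hρ']; linarith
    have hσltρ' : σ < ρ' := by rw [hρ']; linarith
    have huw : 0 < uu - φ w := by linarith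
    have hopb : ‖φ‖ ≤ (uu - φ w)/ρ' := by
      apply ContinuousLinearMap.opNorm_le_bound φ (by positivity)
      intro z
      by_cases hz0 : z = 0
      · simp [hz0]
      · have hznorm : 0 < ‖z‖ := norm_pos_iff.2 hz0
        have hmem : ∀ s : ℝ, |s| * ‖z‖ < ρ → φ w + s * φ z < uu := by
          intro s hs
          have hmem2 : w + s • z ∈ Metric.ball w ρ := by
            rw [Metric.mem_ball, dist_eq_norm]
            have e : w + s • z - w = s • z := by abel
            rw [e, norm_smul]
            exact hs
          have h5 := hball _ hmem2
          rwa [map_add, map_smul, smul_eq_mul] at h5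
        have habs : |ρ'/‖z‖| * ‖z‖ < ρ := by
          rw [abs_of_pos (div_pos hρ'pos hznorm), div_mul_cancel₀ _ hznorm.ne']
          exact hρ'ltρ
        have h7 : φ w + (ρ'/‖z‖) * φ z < uu := hmem _ habs
        have h8 : φ w + (-(ρ'/‖z‖)) * φ z < uu := hmem _ (by rwa [abs_neg])
        have hq : 0 < ρ'/‖z‖ := div_pos hρ'pos hznorm
        have hA : φ z < (uu - φ w)/(ρ'/‖z‖) := by
          rw [lt_div_iff₀ hq]
          nlinarith
        have hB : -φ z < (uu - φ w)/(ρ'/‖z‖) := by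
          rw [lt_div_iff₀ hq]
          nlinarith
        have e : (uu - φ w)/(ρ'/‖z‖) = (uu - φ w)/ρ' * ‖z‖ := by
          rw [div_div_eq_mul_div]
          ring
        rw [e] at hA hB
        rw [Real.norm_eq_abs, abs_le]
        exact ⟨by linarith, by linarith⟩
    have h10 : ‖φ‖ * ρ' ≤ uu - φ w := (le_div_iff₀ hρ'pos).1 hopb
    have h11 : ρ' * ‖φ‖ ≤ -φ w := by linarith
    have hl1 : ‖(-(‖φ‖⁻¹)) • φ‖ ≤ 1 := by
      rw [norm_smul (-(‖φ‖⁻¹)) φ, norm_neg, Real.norm_of_nonneg (inv_nonneg.2 hnφ.le),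
        inv_mul_cancel₀ hnφ.ne']
    have hl2 : ∀ y ∈ K, ((-(‖φ‖⁻¹)) • φ) (y - G x) ≤ 0 := by
      intro y hy
      have hpos := hφpos _ (hKT0 y hy)
      have e : ((-(‖φ‖⁻¹)) • φ) (y - G x) = -(‖φ‖⁻¹) * φ (y - G x) := rfl
      rw [e]
      have : 0 ≤ ‖φ‖⁻¹ := inv_nonneg.2 hnφ.le
      nlinarith
    have hlw : ρ' ≤ ((-(‖φ‖⁻¹)) • φ) w := by
      have e : ((-(‖φ‖⁻¹)) • φ) w = (-φ w) * ‖φ‖⁻¹ := by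
        show -(‖φ‖⁻¹) * φ w = (-φ w) * ‖φ‖⁻¹
        ring
      have h12 : ρ' * ‖φ‖ * ‖φ‖⁻¹ ≤ (-φ w) * ‖φ‖⁻¹ := by
        apply mul_le_mul_of_nonneg_right h11 (inv_nonneg.2 hnφ.le)
      rw [mul_assoc, mul_inv_cancel₀ hnφ.ne', mul_one] at h12
      rw [e]
      exact h12
    have hvmem : (InnerProductSpace.toDual ℝ (EuclideanSpace ℝ (Fin d))).symm
        (((-(‖φ‖⁻¹)) • φ).comp DG) ∈ subdiffPhi G K x :=
      ⟨(-(‖φ‖⁻¹)) • φ, hl1, hl2, fun u' => InnerProductSpace.toDual_symm_apply⟩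
    have hfin : ((-(‖φ‖⁻¹)) • φ) w ≤ σ := le_csSup hbddσ
      ⟨_, hvmem, InnerProductSpace.toDual_symm_apply⟩
    linarith
  -- D tends to σ along 𝓝[>] 0
  have htendD : Tendsto D (𝓝[>] (0:ℝ)) (𝓝 σ) := by
    rw [Metric.tendsto_nhds]
    intro ε hε
    have hlt : sInf (D '' Ioi 0) < σ + ε := lt_of_le_of_lt hJσ (by linarith)
    obtain ⟨_, ⟨α₀, hα₀, rfl⟩, hα₀lt⟩ := (csInf_lt_iff hJbdd hJne).1 hlt
    filter_upwards [Ioc_mem_nhdsGT_of_mem ⟨le_refl 0, hα₀⟩] with α hα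
    obtain ⟨hα0, hαle⟩ := hα
    have h1 := hσle α hα0
    have h2 := (hmono α α₀ hα0 hαle).trans_lt hα₀lt
    rw [Real.dist_eq, abs_lt]
    constructor <;> linarith
  -- the error term
  have hDGat : HasFDerivAt G DG x := hG.hasFDerivAt
  have htendR : Tendsto (fun p : ℝ × EuclideanSpace ℝ (Fin d) =>
      ‖G (x + p.1 • p.2) - G x - p.1 • w‖ / p.1) ((𝓝[>] (0:ℝ)) ×ˢ (𝓝 h)) (𝓝 0) := by
    rw [Metric.tendsto_nhds]
    intro ε hε
    have hh1 : (0:ℝ) < ‖h‖ + 1 := by positivity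
    set c := ε/(4*(‖h‖+1)) with hc
    have hcpos : 0 < c := by positivity
    have hlittle := hDGat.isLittleO.def hcpos
    have hmapx : Tendsto (fun p : ℝ × EuclideanSpace ℝ (Fin d) => x + p.1 • p.2)
        ((𝓝[>] (0:ℝ)) ×ˢ (𝓝 h)) (𝓝 x) := by
      have t1 : Tendsto (fun p : ℝ × EuclideanSpace ℝ (Fin d) => p.1)
          ((𝓝[>] (0:ℝ)) ×ˢ (𝓝 h)) (𝓝 0) := tendsto_fst.mono_right nhdsWithin_le_nhds
      have t2 := t1.smul (tendsto_snd : Tendsto (fun p : ℝ × EuclideanSpace ℝ (Fin d) => p.2)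
        ((𝓝[>] (0:ℝ)) ×ˢ (𝓝 h)) (𝓝 h))
      rw [zero_smul] at t2
      simpa using tendsto_const_nhds.add t2
    have hev1 : ∀ᶠ p : ℝ × EuclideanSpace ℝ (Fin d) in (𝓝[>] (0:ℝ)) ×ˢ (𝓝 h),
        0 < p.1 ∧ dist p.2 h < min 1 (ε/(4*(‖DG‖+1))) := by
      have e1 : ∀ᶠ α : ℝ in 𝓝[>] (0:ℝ), 0 < α := eventually_mem_nhdsWithin
      have e2 : ∀ᶠ u in 𝓝 h, dist u h < min 1 (ε/(4*(‖DG‖+1))) := by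
        have hr' : (0:ℝ) < min 1 (ε/(4*(‖DG‖+1))) :=
          lt_min one_pos (div_pos hε (by positivity))
        filter_upwards [Metric.ball_mem_nhds h hr'] with u hu
          using Metric.mem_ball.mp hu
      exact e1.prod_mk e2
    filter_upwards [hev1, hmapx.eventually hlittle] with p hp hlit
    obtain ⟨hα0, hdist⟩ := hp
    have hur : ‖p.2 - h‖ < min 1 (ε/(4*(‖DG‖+1))) := by rwa [dist_eq_norm] at hdist
    have hu1 : ‖p.2‖ ≤ ‖h‖ + 1 := by
      have h1 : ‖p.2 - h‖ ≤ 1 := hur.le.trans (min_le_left _ _)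
      calc ‖p.2‖ = ‖h + (p.2 - h)‖ := by rw [add_sub_cancel]
      _ ≤ ‖h‖ + ‖p.2 - h‖ := norm_add_le _ _
      _ ≤ ‖h‖ + 1 := by linarith
    have hz : x + p.1 • p.2 - x = p.1 • p.2 := add_sub_cancel_left x _
    rw [hz] at hlit
    have hR : ‖G (x + p.1 • p.2) - G x - p.1 • w‖ ≤
        c * (p.1 * (‖h‖+1)) + ‖DG‖ * (p.1 * ‖p.2 - h‖) := by
      have e : G (x + p.1 • p.2) - G x - p.1 • w =
          (G (x + p.1 • p.2) - G x - DG (p.1 • p.2)) + (DG (p.1 • p.2) - p.1 • w) := by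
        abel
      rw [e]
      refine (norm_add_le _ _).trans ?_
      have b1 : ‖G (x + p.1 • p.2) - G x - DG (p.1 • p.2)‖ ≤ c * (p.1 * (‖h‖+1)) := by
        refine hlit.trans ?_
        rw [norm_smul, Real.norm_of_nonneg hα0.le]
        gcongr
      have b2 : ‖DG (p.1 • p.2) - p.1 • w‖ ≤ ‖DG‖ * (p.1 * ‖p.2 - h‖) := by
        have e2 : DG (p.1 • p.2) - p.1 • w = DG (p.1 • (p.2 - h)) := by
          rw [hwdef, map_smul, map_smul, map_sub, smul_sub]
        rw [e2]
        refine (DG.le_opNorm _).trans ?_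
        rw [norm_smul, Real.norm_of_nonneg hα0.le]
      linarith
    have hfinal : ‖G (x + p.1 • p.2) - G x - p.1 • w‖ / p.1 ≤
        c * (‖h‖+1) + ‖DG‖ * ‖p.2 - h‖ := by
      rw [div_le_iff₀ hα0]
      calc ‖G (x + p.1 • p.2) - G x - p.1 • w‖
          ≤ c * (p.1 * (‖h‖+1)) + ‖DG‖ * (p.1 * ‖p.2 - h‖) := hR
      _ = (c * (‖h‖+1) + ‖DG‖ * ‖p.2 - h‖) * p.1 := by ring
    have hb1 : c * (‖h‖+1) = ε/4 := by rw [hc]; field_simp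
    have hb2 : ‖DG‖ * ‖p.2 - h‖ < ε/2 := by
      have h1 : ‖p.2 - h‖ ≤ ε/(4*(‖DG‖+1)) := hur.le.trans (min_le_right _ _)
      have h2 : ‖DG‖ * ‖p.2 - h‖ ≤ ‖DG‖ * (ε/(4*(‖DG‖+1))) := by
        gcongr
      have h3 : ‖DG‖ * (ε/(4*(‖DG‖+1))) < ε/2 := by
        rw [mul_div_assoc']
        rw [div_lt_iff₀ (by positivity)]
        nlinarith [norm_nonneg DG]
      linarith
    rw [Real.dist_eq, sub_zero, abs_of_nonneg (div_nonneg (norm_nonneg _) hα0.le)]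
    calc ‖G (x + p.1 • p.2) - G x - p.1 • w‖ / p.1
        ≤ c * (‖h‖+1) + ‖DG‖ * ‖p.2 - h‖ := hfinal
    _ < ε := by rw [hb1]; linarith
  -- assemble
  have h1 : Tendsto (fun p : ℝ × EuclideanSpace ℝ (Fin d) => D p.1)
      ((𝓝[>] (0:ℝ)) ×ˢ (𝓝 h)) (𝓝 σ) := htendD.comp tendsto_fst
  have h2 : Tendsto (fun p : ℝ × EuclideanSpace ℝ (Fin d) =>
      Metric.infDist (G (x + p.1 • p.2)) K / p.1 - D p.1)
      ((𝓝[>] (0:ℝ)) ×ˢ (𝓝 h)) (𝓝 0) := by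
    apply squeeze_zero_norm' _ htendR
    have e1 : ∀ᶠ p : ℝ × EuclideanSpace ℝ (Fin d) in (𝓝[>] (0:ℝ)) ×ˢ (𝓝 h), 0 < p.1 := by
      have e0 : ∀ᶠ α : ℝ in 𝓝[>] (0:ℝ), 0 < α := eventually_mem_nhdsWithin
      have e0' : ∀ᶠ u : EuclideanSpace ℝ (Fin d) in 𝓝 h, True :=
        Filter.Eventually.of_forall fun _ => trivial
      exact (e0.prod_mk e0').mono fun p hp => hp.1
    filter_upwards [e1] with p hα0
    have e2 : Metric.infDist (G (x + p.1 • p.2)) K / p.1 - D p.1 =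
        (Metric.infDist (G (x + p.1 • p.2)) K - Metric.infDist (G x + p.1 • w) K) / p.1 := by
      rw [hD]; ring
    rw [e2, Real.norm_eq_abs, abs_div, abs_of_pos hα0]
    gcongr
    calc |Metric.infDist (G (x + p.1 • p.2)) K - Metric.infDist (G x + p.1 • w) K|
        ≤ dist (G (x + p.1 • p.2)) (G x + p.1 • w) := abs_infDist_sub_le _ _ _
    _ = ‖G (x + p.1 • p.2) - G x - p.1 • w‖ := by rw [dist_eq_norm]; congr 1; abel
  have := h1.add h2
  rw [add_zero] at this
  refine this.congr fun p => ?_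
  ring

end DistPart
theorem penalty_function_hadamard_subdifferential
    {d : ℕ} {W : Type*} [TopologicalSpace W] [CompactSpace W] [T2Space W] [Nonempty W]
    {Y : Type*} [NormedAddCommGroup Y] [NormedSpace ℝ Y] [CompleteSpace Y]
    (A : Set (EuclideanSpace ℝ (Fin d))) (K : Set Y)
    (G : EuclideanSpace ℝ (Fin d) → Y) (f : EuclideanSpace ℝ (Fin d) → W → ℝ)
    (hAne : A.Nonempty) (hAcl : IsClosed A) (hAconv : Convex ℝ A)
    (hKne : K.Nonempty) (hKcl : IsClosed K) (hKconv : Convex ℝ K)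
    (hKcone : ∀ (c : ℝ), 0 ≤ c → ∀ y ∈ K, c • y ∈ K)
    (hG : ContDiff ℝ 1 G)
    (hfdiff : ∀ ω, Differentiable ℝ (fun x => f x ω))
    (hfc : Continuous fun p : EuclideanSpace ℝ (Fin d) × W => f p.1 p.2)
    (hfg : Continuous fun p : EuclideanSpace ℝ (Fin d) × W => gradient (fun z => f z p.2) p.1)
    (x : EuclideanSpace ℝ (Fin d)) (hxK : G x ∈ K) (c : ℝ) (hc : 0 ≤ c) :
    (∀ h : EuclideanSpace ℝ (Fin d),
      Tendsto (fun p : ℝ × EuclideanSpace ℝ (Fin d) =>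
          (penaltyFn f G K c (x + p.1 • p.2) - penaltyFn f G K c x) / p.1)
        ((𝓝[>] (0:ℝ)) ×ˢ (𝓝 h))
        (𝓝 (sSup ((fun v => ⟪v, h⟫) '' (subdiffF f x + c • subdiffPhi G K x))))) ∧
    Convex ℝ (subdiffF f x + c • subdiffPhi G K x) ∧
    IsCompact (subdiffF f x + c • subdiffPhi G K x) := by
  have hAGcomp : IsCompact (activeGrads f x) := isCompact_activeGrads hfc hfg
  have hAGne : (activeGrads f x).Nonempty := nonempty_activeGrads hfc
  have hS₁comp : IsCompact (subdiffF f x) := isCompact_convexHull_euclidean hAGcomp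
  have hS₁conv : Convex ℝ (subdiffF f x) := convex_convexHull ℝ _
  have hS₁ne : (subdiffF f x).Nonempty := by
    obtain ⟨v, hv⟩ := hAGne
    exact ⟨v, subset_convexHull ℝ _ hv⟩
  have hPcomp : IsCompact (subdiffPhi G K x) := isCompact_subdiffPhi G K x
  have hPconv : Convex ℝ (subdiffPhi G K x) := convex_subdiffPhi G K x
  have hPne : (subdiffPhi G K x).Nonempty := ⟨0, zero_mem_subdiffPhi G K x⟩
  have hS₂comp : IsCompact (c • subdiffPhi G K x) := by
    rw [← Set.image_smul]
    exact hPcomp.image (continuous_const_smul c)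
  have hS₂conv : Convex ℝ (c • subdiffPhi G K x) := hPconv.smul c
  have hS₂ne : (c • subdiffPhi G K x).Nonempty := hPne.smul_set
  have hsum_comp : IsCompact (subdiffF f x + c • subdiffPhi G K x) := hS₁comp.add hS₂comp
  have hsum_conv : Convex ℝ (subdiffF f x + c • subdiffPhi G K x) := hS₁conv.add hS₂conv
  refine ⟨fun h => ?_, hsum_conv, hsum_comp⟩
  have hcont : Continuous fun v : EuclideanSpace ℝ (Fin d) => (⟪v, h⟫ : ℝ) :=
    continuous_id.inner continuous_const
  have hne1 : ((fun v => (⟪v, h⟫ : ℝ)) '' subdiffF f x).Nonempty := hS₁ne.image _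
  have hbdd1 : BddAbove ((fun v => (⟪v, h⟫ : ℝ)) '' subdiffF f x) :=
    (hS₁comp.image hcont).bddAbove
  have hne2 : ((fun v => (⟪v, h⟫ : ℝ)) '' (c • subdiffPhi G K x)).Nonempty := hS₂ne.image _
  have hbdd2 : BddAbove ((fun v => (⟪v, h⟫ : ℝ)) '' (c • subdiffPhi G K x)) :=
    (hS₂comp.image hcont).bddAbove
  have hAGbdd : BddAbove ((fun v => (⟪v, h⟫ : ℝ)) '' activeGrads f x) :=
    ((hAGcomp.image hcont)).bddAbove
  have heq : sSup ((fun v => (⟪v, h⟫ : ℝ)) '' (subdiffF f x + c • subdiffPhi G K x))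
      = Fdir f x h + c * sSup ((fun v => (⟪v, h⟫ : ℝ)) '' subdiffPhi G K x) := by
    rw [image_inner_add, csSup_add hne1 hbdd1 hne2 hbdd2]
    congr 1
    · exact sSup_image_inner_convexHull hAGne h hAGbdd
    · rw [image_inner_smul_set, Real.sSup_smul_of_nonneg hc, smul_eq_mul]
  rw [heq]
  have hd := danskin_tendsto (x := x) hfdiff hfc hfg h
  have hdist := distpart_tendsto K G hKconv ((hG.differentiable one_ne_zero) x) hxK h
  have hcomb := hd.add (hdist.const_mul c)
  apply Tendsto.congr' _ hcomb
  have e1 : ∀ᶠ p : ℝ × EuclideanSpace ℝ (Fin d) in (𝓝[>] (0:ℝ)) ×ˢ (𝓝 h), 0 < p.1 := by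
    have e0 : ∀ᶠ α : ℝ in 𝓝[>] (0:ℝ), 0 < α := eventually_mem_nhdsWithin
    have e0' : ∀ᶠ u : EuclideanSpace ℝ (Fin d) in 𝓝 h, True :=
      Filter.Eventually.of_forall fun _ => trivial
    exact (e0.prod_mk e0').mono fun p hp => hp.1
  filter_upwards [e1] with p hp
  show (Fmax f (x + p.1 • p.2) - Fmax f x) / p.1
      + c * (Metric.infDist (G (x + p.1 • p.2)) K / p.1)
      = (penaltyFn f G K c (x + p.1 • p.2) - penaltyFn f G K c x) / p.1
  have hzero : Metric.infDist (G x) K = 0 := Metric.infDist_zero_of_mem hxK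
  show (Fmax f (x + p.1 • p.2) - Fmax f x) / p.1
      + c * (Metric.infDist (G (x + p.1 • p.2)) K / p.1)
      = (Fmax f (x + p.1 • p.2) + c * Metric.infDist (G (x + p.1 • p.2)) K
        - (Fmax f x + c * Metric.infDist (G x) K)) / p.1
  rw [hzero]
  field_simp
  ring
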